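/- Entailment property for programs: let ⟨ℛ, Q, C⟩ be an admissible triple and P a SQCLP(ℛ,Q,C)-program. If P ⊢_{ℛ,Q,C} φ and φ ⊨_{Q,C} φ' for observable qc-atoms φ and φ', then P ⊢_{ℛ,Q,C} φ'. -/

import Mathlib

open scoped BigOperators

/-- A qualification domain: a bounded lattice equipped with an attenuation operation. -/
structure QualificationDomain (D : Type*) [Lattice D] [BoundedOrder D] where
  att : D → D → D
  att_assoc : ∀ d e f : D, att (att d e) f = att d (att e f)
  att_comm : ∀ d e : D, att d e = att e d
  att_mono : ∀ d d' e e' : D, d ≤ d' → e ≤ e' → att d e ≤ att d' e'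
  att_top : ∀ d : D, att d ⊤ = d
  att_bot : ∀ d : D, att d ⊥ = ⊥
  att_le : ∀ d e : D, att d e ≤ e
  att_ne_bot : ∀ d e : D, d ≠ ⊥ → e ≠ ⊥ → att d e ≠ ⊥
  att_inf : ∀ d e₁ e₂ : D, att d (e₁ ⊓ e₂) = att d e₁ ⊓ att d e₂

/-- First-order terms over variables `V` and data constructors `CS`. -/
inductive Trm (V : Type*) (CS : Type*) : Type _
  | var : V → Trm V CS
  | app : CS → List (Trm V CS) → Trm V CS

variable {V CS DP PP : Type*}

/-- Application of a substitution to a term. -/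
def Trm.subst (θ : V → Trm V CS) : Trm V CS → Trm V CS
  | .var X => θ X
  | .app c ts => .app c (ts.attach.map fun t => t.1.subst θ)
decreasing_by
  have := List.sizeOf_lt_of_mem t.2
  simp only [Trm.app.sizeOf_spec]
  omega

/-- Application of a valuation (ground substitution) to a term; ground terms are
terms over the empty set of variables. -/
def Trm.applyVal (η : V → Trm Empty CS) : Trm V CS → Trm Empty CS
  | .var X => η X
  | .app c ts => .app c (ts.attach.map fun t => t.1.applyVal η)
decreasing_by
  have := List.sizeOf_lt_of_mem t.2
  simp only [Trm.app.sizeOf_spec]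
  omega

variable {D : Type*} [Lattice D] [BoundedOrder D]

/-- The extension of a proximity relation on symbols to a proximity relation on terms:
`ext R (var X) (var X) = ⊤`, `ext R t s = ⊥` if exactly one of `t`, `s` is a variable or
they are applications of different arities, and
`ext R (c(t₁,…,tₙ)) (c'(s₁,…,sₙ)) = R c c' ⊓ ext R t₁ s₁ ⊓ ⋯ ⊓ ext R tₙ sₙ`. -/
def Trm.ext [DecidableEq V] (R : CS → CS → D) : Trm V CS → Trm V CS → D
  | .var X, .var Y => if X = Y then (⊤ : D) else ⊥
  | .var _, .app _ _ => ⊥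
  | .app _ _, .var _ => ⊥
  | .app c ts, .app c' ss =>
      if ts.length = ss.length then
        R c c' ⊓ ((ts.zip ss).attach.map (fun p => Trm.ext R p.1.1 p.1.2)).foldr (· ⊓ ·) ⊤
      else ⊥
termination_by t _ => sizeOf t
decreasing_by
  have h1 : p.1.1 ∈ ts := (List.of_mem_zip p.2).1
  have := List.sizeOf_lt_of_mem h1
  simp only [Trm.app.sizeOf_spec]
  omega

/-- Constraints over terms: primitive atoms, equations, conjunction and
existential quantification. -/
inductive Constr (V CS PP : Type*) : Type _
  | prim : PP → List (Trm V CS) → Constr V CS PP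
  | eq : Trm V CS → Trm V CS → Constr V CS PP
  | and : Constr V CS PP → Constr V CS PP → Constr V CS PP
  | ex : V → Constr V CS PP → Constr V CS PP

/-- Satisfaction of a constraint by a valuation, relative to an interpretation `pI` of the
primitive predicates over ground terms.  An equation is true iff both sides evaluate to the
same ground term. -/
def Constr.sat [DecidableEq V] (pI : PP → List (Trm Empty CS) → Prop)
    (η : V → Trm Empty CS) : Constr V CS PP → Prop
  | .prim p ts => pI p (ts.map (Trm.applyVal η))
  | .eq t s => t.applyVal η = s.applyVal η
  | .and c₁ c₂ => c₁.sat pI η ∧ c₂.sat pI η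
  | .ex X c => ∃ u : Trm Empty CS, c.sat pI (Function.update η X u)

/-- The set of solutions of a set of constraints. -/
def Sol [DecidableEq V] (pI : PP → List (Trm Empty CS) → Prop)
    (Pi : Set (Constr V CS PP)) : Set (V → Trm Empty CS) :=
  {η | ∀ c ∈ Pi, c.sat pI η}

/-- Entailment `Π ⊨_C π` of a constraint by a set of constraints. -/
def Entails [DecidableEq V] (pI : PP → List (Trm Empty CS) → Prop)
    (Pi : Set (Constr V CS PP)) (c : Constr V CS PP) : Prop :=
  ∀ η ∈ Sol pI Pi, c.sat pI η

/-- Semantic form of the entailment `Π' ⊨_C Πθ`: every solution of `Π'`, composed with the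
substitution `θ`, is a solution of `Π`. -/
def EntailsSubst [DecidableEq V] (pI : PP → List (Trm Empty CS) → Prop)
    (Pi' : Set (Constr V CS PP)) (θ : V → Trm V CS) (Pi : Set (Constr V CS PP)) : Prop :=
  ∀ η ∈ Sol pI Pi', (fun X => (θ X).applyVal η) ∈ Sol pI Pi

/-- Constraint-based term proximity: `t ≈_{d,Π} s` iff there are terms `t̂`, `ŝ` with
`Π ⊨_C t == t̂`, `Π ⊨_C s == ŝ` and `ext R t̂ ŝ ⊒ d`. -/
def TermClose [DecidableEq V] (R : CS → CS → D) (pI : PP → List (Trm Empty CS) → Prop)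
    (d : D) (Pi : Set (Constr V CS PP)) (t s : Trm V CS) : Prop :=
  ∃ th sh : Trm V CS,
    Entails pI Pi (Constr.eq t th) ∧ Entails pI Pi (Constr.eq s sh) ∧ d ≤ Trm.ext R th sh

/-- Atoms: defined atoms, primitive atoms and equations. -/
inductive Atom (V CS DP PP : Type*) : Type _
  | defd : DP → List (Trm V CS) → Atom V CS DP PP
  | prim : PP → List (Trm V CS) → Atom V CS DP PP
  | eq : Trm V CS → Trm V CS → Atom V CS DP PP

/-- Application of a substitution to an atom. -/
def Atom.subst (θ : V → Trm V CS) : Atom V CS DP PP → Atom V CS DP PP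
  | .defd r ts => .defd r (ts.map (Trm.subst θ))
  | .prim p ts => .prim p (ts.map (Trm.subst θ))
  | .eq t s => .eq (t.subst θ) (s.subst θ)

/-- A defined atom. -/
def Atom.IsDefined : Atom V CS DP PP → Prop
  | .defd _ _ => True
  | .prim _ _ => False
  | .eq _ _ => False

/-- A qualified constrained atom (qc-atom) `A#d ⇐ Π`. -/
structure QCAtom (V CS DP PP D : Type*) where
  atom : Atom V CS DP PP
  deg : D
  cons : Set (Constr V CS PP)

/-- A qc-atom is observable iff its qualification value is not `⊥` and its constraint
set is satisfiable. -/
def Observable [DecidableEq V] (pI : PP → List (Trm Empty CS) → Prop)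
    (φ : QCAtom V CS DP PP D) : Prop :=
  φ.deg ≠ ⊥ ∧ (Sol pI φ.cons).Nonempty

/-- The entailment relation `φ ⊨_{Q,C} φ'` between qc-atoms: there is a substitution `θ`
with `A' = Aθ`, `d' ⊑ d` and `Π' ⊨_C Πθ`. -/
def QCEntails [DecidableEq V] (pI : PP → List (Trm Empty CS) → Prop)
    (φ φ' : QCAtom V CS DP PP D) : Prop :=
  ∃ θ : V → Trm V CS,
    φ'.atom = φ.atom.subst θ ∧ φ'.deg ≤ φ.deg ∧ EntailsSubst pI φ'.cons θ φ.cons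

/-- A qc-interpretation: a set of defined observable qc-atoms closed under `⊨_{Q,C}`. -/
def IsInterp [DecidableEq V] (pI : PP → List (Trm Empty CS) → Prop)
    (I : Set (QCAtom V CS DP PP D)) : Prop :=
  (∀ φ ∈ I, φ.atom.IsDefined ∧ Observable pI φ) ∧
  (∀ φ ∈ I, ∀ φ' : QCAtom V CS DP PP D,
    QCEntails pI φ φ' → Observable pI φ' → φ' ∈ I)

/-- Validity of an observable qc-atom in a qc-interpretation. -/
def Valid [DecidableEq V] (R : CS → CS → D) (pI : PP → List (Trm Empty CS) → Prop)
    (I : Set (QCAtom V CS DP PP D)) (φ : QCAtom V CS DP PP D) : Prop :=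
  match φ.atom with
  | .defd _ _ => φ ∈ I
  | .prim p ts => Entails pI φ.cons (Constr.prim p ts)
  | .eq t s => TermClose R pI φ.deg φ.cons t s

/-- A `Q`-valued proximity relation on the symbols (variables, data constructors, defined
predicates, primitive predicates): it is determined by its restrictions to data constructors
and to defined predicate symbols, since it behaves as the identity on variables and is `⊥`
between symbols of different kinds (and on primitive predicates it is only nonbottom between
equal symbols). -/
structure ProximityRel (D : Type*) [Lattice D] [BoundedOrder D] {CS DP : Type*}
    (arC : CS → ℕ) (arD : DP → ℕ) where
  dc : CS → CS → D
  dp : DP → DP → D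
  dc_refl : ∀ c, dc c c = ⊤
  dc_symm : ∀ c c', dc c c' = dc c' c
  dc_arity : ∀ c c', dc c c' ≠ ⊥ → arC c = arC c'
  dp_refl : ∀ r, dp r r = ⊤
  dp_symm : ∀ r r', dp r r' = dp r' r
  dp_arity : ∀ r r', dp r r' ≠ ⊥ → arD r = arD r'

/-- A program clause `p(t₁,…,tₙ) ←α– B₁#w₁, …, Bₘ#wₘ`; a threshold `wⱼ` is either `some w`
with `w ∈ D` or `none` (standing for `?`). -/
structure Clause (V CS DP PP D : Type*) where
  headPred : DP
  headArgs : List (Trm V CS)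
  att : D
  body : List (Atom V CS DP PP × Option D)

/-- Well-formedness of a clause: the attenuation factor and all thresholds are `≠ ⊥`. -/
def ClauseWF (C : Clause V CS DP PP D) : Prop :=
  C.att ≠ ⊥ ∧ ∀ bw ∈ C.body, ∀ w, bw.2 = some w → w ≠ (⊥ : D)

/-- A SQCLP program: a set of well-formed clauses. -/
def ProgWF (P : Set (Clause V CS DP PP D)) : Prop := ∀ C ∈ P, ClauseWF C

/-- `e ⊒? w`: trivially true for `w = ?`, and `w ⊑ e` otherwise. -/
def MeetsThreshold (e : D) : Option D → Prop
  | none => True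
  | some w => w ≤ e

/-- The observable defined qc-atom `φ : p'(t'₁,…,t'ₙ)#d ⇐ Π` is an immediate consequence of
the qc-interpretation `I` via the clause `C`. -/
def ImmCons [DecidableEq V] (Q : QualificationDomain D) {arC : CS → ℕ} {arD : DP → ℕ}
    (Rl : ProximityRel D arC arD) (pI : PP → List (Trm Empty CS) → Prop)
    (I : Set (QCAtom V CS DP PP D)) (C : Clause V CS DP PP D)
    (φ : QCAtom V CS DP PP D) : Prop :=
  ∃ (p' : DP) (ts' : List (Trm V CS)),
    φ.atom = Atom.defd p' ts' ∧ Observable pI φ ∧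
    ∃ (θ : V → Trm V CS) (hn : C.headArgs.length = ts'.length)
      (ds : Fin ts'.length → D) (es : Fin C.body.length → D),
      Rl.dp p' C.headPred ≠ ⊥ ∧
      (∀ i, ds i ≠ ⊥) ∧ (∀ j, es j ≠ ⊥) ∧
      (∀ i : Fin ts'.length,
        TermClose Rl.dc pI (ds i) φ.cons (ts'.get i)
          ((C.headArgs.get (Fin.cast hn.symm i)).subst θ)) ∧
      (∀ j : Fin C.body.length,
        Valid Rl.dc pI I ⟨((C.body.get j).1.subst θ), es j, φ.cons⟩) ∧
      (∀ j : Fin C.body.length, MeetsThreshold (es j) (C.body.get j).2) ∧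
      φ.deg ≤ (Rl.dp p' C.headPred ⊓ Finset.univ.inf ds) ⊓ Q.att C.att (Finset.univ.inf es)

/-- The interpretation transformer `T_P`. -/
def Tp [DecidableEq V] (Q : QualificationDomain D) {arC : CS → ℕ} {arD : DP → ℕ}
    (Rl : ProximityRel D arC arD) (pI : PP → List (Trm Empty CS) → Prop)
    (P : Set (Clause V CS DP PP D)) (I : Set (QCAtom V CS DP PP D)) :
    Set (QCAtom V CS DP PP D) :=
  {φ | ∃ C ∈ P, ImmCons Q Rl pI I C φ}

/-- `I` is a model of the clause `C`. -/
def ModelsClause [DecidableEq V] (Q : QualificationDomain D) {arC : CS → ℕ} {arD : DP → ℕ}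
    (Rl : ProximityRel D arC arD) (pI : PP → List (Trm Empty CS) → Prop)
    (I : Set (QCAtom V CS DP PP D)) (C : Clause V CS DP PP D) : Prop :=
  ∀ φ, ImmCons Q Rl pI I C φ → φ ∈ I

/-- `I ⊨_{ℛ,Q,C} P` : `I` is a model of the program `P`. -/
def ModelsProg [DecidableEq V] (Q : QualificationDomain D) {arC : CS → ℕ} {arD : DP → ℕ}
    (Rl : ProximityRel D arC arD) (pI : PP → List (Trm Empty CS) → Prop)
    (I : Set (QCAtom V CS DP PP D)) (P : Set (Clause V CS DP PP D)) : Prop :=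
  ∀ C ∈ P, ModelsClause Q Rl pI I C

/-- Derivability `P ⊢_{ℛ,Q,C} φ` in the Proximity-based Qualified Constrained Horn Logic
SQCHL(ℛ,Q,C), with inference rules SQDA, SQEA and SQPA. -/
inductive Deriv [DecidableEq V] (Q : QualificationDomain D) {arC : CS → ℕ} {arD : DP → ℕ}
    (Rl : ProximityRel D arC arD) (pI : PP → List (Trm Empty CS) → Prop)
    (P : Set (Clause V CS DP PP D)) : QCAtom V CS DP PP D → Prop
  | sqea : ∀ (d : D) (Pi : Set (Constr V CS PP)) (t s : Trm V CS),
      d ≠ ⊥ → TermClose Rl.dc pI d Pi t s → Deriv Q Rl pI P ⟨Atom.eq t s, d, Pi⟩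
  | sqpa : ∀ (d : D) (Pi : Set (Constr V CS PP)) (p : PP) (ts : List (Trm V CS)),
      d ≠ ⊥ → Entails pI Pi (Constr.prim p ts) → Deriv Q Rl pI P ⟨Atom.prim p ts, d, Pi⟩
  | sqda : ∀ (C : Clause V CS DP PP D), C ∈ P →
      ∀ (θ : V → Trm V CS) (p' : DP) (ts' : List (Trm V CS)) (d : D)
        (Pi : Set (Constr V CS PP)) (hn : C.headArgs.length = ts'.length)
        (ds : Fin ts'.length → D) (es : Fin C.body.length → D),
      Rl.dp p' C.headPred ≠ ⊥ →
      (∀ i, ds i ≠ ⊥) → (∀ j, es j ≠ ⊥) →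
      (∀ i : Fin ts'.length,
        Deriv Q Rl pI P
          ⟨Atom.eq (ts'.get i) ((C.headArgs.get (Fin.cast hn.symm i)).subst θ), ds i, Pi⟩) →
      (∀ j : Fin C.body.length,
        Deriv Q Rl pI P ⟨((C.body.get j).1.subst θ), es j, Pi⟩) →
      (∀ j : Fin C.body.length, MeetsThreshold (es j) (C.body.get j).2) →
      d ≤ (Rl.dp p' C.headPred ⊓ Finset.univ.inf ds) ⊓ Q.att C.att (Finset.univ.inf es) →
      Deriv Q Rl pI P ⟨Atom.defd p' ts', d, Pi⟩


/-!
Derivations are stable under instantiation: applying `θ` throughout a derivation of `A#d ⇐ Π`,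
lowering the value at the root to any `d' ≠ ⊥` below `d` (SQDA only bounds it from above) and
replacing `Π` by any `Π'` with `Π' ⊨_C Πθ` gives a derivation of `Aθ#d' ⇐ Π'`. The SQEA and SQPA
leaves survive because `C`-entailment is stable under substitution and proximity of terms can
only grow, `ℛ(t, s) ⊑ ℛ(tθ, sθ)`, the variable case being reflexivity of `ℛ` on terms.
-/

theorem List.le_foldr_inf_iff {l : List D} {a : D} : a ≤ l.foldr (· ⊓ ·) ⊤ ↔ ∀ b ∈ l, a ≤ b := by
  rw [← Multiset.inf_coe, Multiset.le_inf]
  rfl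

theorem List.foldr_inf_le {l : List D} {a : D} (h : a ∈ l) : l.foldr (· ⊓ ·) ⊤ ≤ a :=
  le_foldr_inf_iff.1 le_rfl a h

theorem List.zip_self_eq_map {α : Type*} (l : List α) : l.zip l = l.map fun a => (a, a) := by
  induction l <;> simp [*]

theorem Finset.inf_univ_fin_cast {n m : ℕ} (h : n = m) (f : Fin m → D) :
    (Finset.univ.inf fun i : Fin n => f (Fin.cast h i)) = Finset.univ.inf f := by
  subst h
  rfl

namespace Trm

@[induction_eliminator]
theorem induction_on' {motive : Trm V CS → Prop} (var : ∀ X, motive (.var X))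
    (app : ∀ c ts, (∀ t ∈ ts, motive t) → motive (.app c ts)) : ∀ t, motive t
  | .var X => var X
  | .app c ts => app c ts fun t _ => induction_on' var app t

theorem subst_app (θ : V → Trm V CS) (c : CS) (ts : List (Trm V CS)) :
    (Trm.app c ts).subst θ = .app c (ts.map (Trm.subst θ)) := by
  rw [Trm.subst, List.attach_map_val (f := Trm.subst θ)]

theorem applyVal_app (η : V → Trm Empty CS) (c : CS) (ts : List (Trm V CS)) :
    (Trm.app c ts).applyVal η = .app c (ts.map (Trm.applyVal η)) := by
  rw [Trm.applyVal, List.attach_map_val (f := Trm.applyVal η)]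

theorem applyVal_subst (θ : V → Trm V CS) (η : V → Trm Empty CS) (t : Trm V CS) :
    (t.subst θ).applyVal η = t.applyVal fun X => (θ X).applyVal η := by
  induction t with
  | var X => rw [Trm.subst, Trm.applyVal]
  | app c ts ih =>
    rw [subst_app, applyVal_app, applyVal_app, List.map_map]
    exact congrArg _ (List.map_congr_left ih)

theorem subst_subst (θ₁ θ₂ : V → Trm V CS) (t : Trm V CS) :
    (t.subst θ₁).subst θ₂ = t.subst fun X => (θ₁ X).subst θ₂ := by
  induction t with
  | var X => rw [Trm.subst, Trm.subst]
  | app c ts ih =>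
    rw [subst_app, subst_app, subst_app, List.map_map]
    exact congrArg _ (List.map_congr_left ih)

variable [DecidableEq V] (R : CS → CS → D)

theorem ext_app (c c' : CS) (ts ss : List (Trm V CS)) :
    Trm.ext R (.app c ts) (.app c' ss) =
      if ts.length = ss.length then
        R c c' ⊓ ((ts.zip ss).map fun p => Trm.ext R p.1 p.2).foldr (· ⊓ ·) ⊤
      else ⊥ := by
  rw [Trm.ext]
  congr 3
  exact List.attach_map_val (l := ts.zip ss) (f := fun p => Trm.ext R p.1 p.2)

theorem ext_self (hR : ∀ c, R c c = ⊤) (t : Trm V CS) : Trm.ext R t t = ⊤ := by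
  induction t with
  | var X => rw [Trm.ext, if_pos rfl]
  | app c ts ih =>
    rw [ext_app, if_pos rfl, hR, top_inf_eq, List.zip_self_eq_map, List.map_map]
    refine top_unique (List.le_foldr_inf_iff.2 fun b hb => ?_)
    obtain ⟨t, ht, rfl⟩ := List.mem_map.1 hb
    exact (ih t ht).ge

theorem ext_le_ext_subst (hR : ∀ c, R c c = ⊤) (θ : V → Trm V CS) (t s : Trm V CS) :
    Trm.ext R t s ≤ Trm.ext R (t.subst θ) (s.subst θ) := by
  induction t generalizing s with
  | var X =>
    cases s with
    | var Y =>
      by_cases hXY : X = Y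
      · rw [hXY]
        exact le_top.trans (ext_self R hR _).ge
      · rw [Trm.ext, if_neg hXY]
        exact bot_le
    | app _ _ =>
      rw [Trm.ext]
      exact bot_le
  | app c ts ih =>
    cases s with
    | var _ =>
      rw [Trm.ext]
      exact bot_le
    | app c' ss =>
      rw [subst_app, subst_app, ext_app, ext_app, List.length_map, List.length_map,
        List.zip_map, List.map_map]
      split_ifs
      · refine inf_le_inf_left _ (List.le_foldr_inf_iff.2 fun b hb => ?_)
        obtain ⟨p, hp, rfl⟩ := List.mem_map.1 hb
        exact (List.foldr_inf_le (List.mem_map_of_mem hp)).trans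
          (ih p.1 (List.of_mem_zip hp).1 p.2)
      · exact le_rfl

end Trm

theorem Atom.subst_subst (θ₁ θ₂ : V → Trm V CS) (A : Atom V CS DP PP) :
    (A.subst θ₁).subst θ₂ = A.subst fun X => (θ₁ X).subst θ₂ := by
  cases A <;> simp only [Atom.subst, List.map_map, Function.comp_def, Trm.subst_subst]

section Instantiation

variable [DecidableEq V] {pI : PP → List (Trm Empty CS) → Prop}
  {Pi Pi' : Set (Constr V CS PP)} {θ : V → Trm V CS}

theorem TermClose.subst {R : CS → CS → D} (hR : ∀ c, R c c = ⊤) {d d' : D} {t s : Trm V CS}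
    (h : TermClose R pI d Pi t s) (hd : d' ≤ d) (hE : EntailsSubst pI Pi' θ Pi) :
    TermClose R pI d' Pi' (t.subst θ) (s.subst θ) := by
  obtain ⟨th, sh, hth, hsh, hext⟩ := h
  refine ⟨th.subst θ, sh.subst θ, fun η hη => ?_, fun η hη => ?_,
    hd.trans (hext.trans (Trm.ext_le_ext_subst R hR θ th sh))⟩
  · simpa only [Constr.sat, Trm.applyVal_subst] using hth _ (hE η hη)
  · simpa only [Constr.sat, Trm.applyVal_subst] using hsh _ (hE η hη)

theorem Entails.prim_subst {p : PP} {ts : List (Trm V CS)}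
    (h : Entails pI Pi (Constr.prim p ts)) (hE : EntailsSubst pI Pi' θ Pi) :
    Entails pI Pi' (Constr.prim p (ts.map (Trm.subst θ))) := fun η hη => by
  simpa only [Constr.sat, List.map_map, Function.comp_def, Trm.applyVal_subst] using
    h _ (hE η hη)

theorem Deriv.subst {arC : CS → ℕ} {arD : DP → ℕ} {Q : QualificationDomain D}
    {Rl : ProximityRel D arC arD} {P : Set (Clause V CS DP PP D)} {φ : QCAtom V CS DP PP D}
    (h : Deriv Q Rl pI P φ) {d' : D} (hd' : d' ≠ ⊥) (hle : d' ≤ φ.deg)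
    (hE : EntailsSubst pI Pi' θ φ.cons) :
    Deriv Q Rl pI P ⟨φ.atom.subst θ, d', Pi'⟩ := by
  induction h generalizing θ d' Pi' with
  | sqea d Pi t s _ hts => exact .sqea d' Pi' _ _ hd' (hts.subst Rl.dc_refl hle hE)
  | sqpa d Pi p ts _ hp => exact .sqpa d' Pi' p _ hd' (hp.prim_subst hE)
  | sqda C hC θ₀ p' ts' d Pi hn ds es hp' hds hes _ _ hth hd ih_eqs ih_body =>
    have hlen : (ts'.map (Trm.subst θ)).length = ts'.length := List.length_map _
    refine .sqda C hC (fun X => (θ₀ X).subst θ) p' _ d' Pi' (hn.trans hlen.symm)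
      (fun i => ds (Fin.cast hlen i)) es hp' (fun i => hds _) hes (fun i => ?_) (fun j => ?_)
      hth ?_
    · have hi := ih_eqs (Fin.cast hlen i) (hds _) le_rfl hE
      simp only [Atom.subst, Trm.subst_subst] at hi
      simpa using hi
    · simpa only [Atom.subst_subst] using ih_body j (hes j) le_rfl hE
    · rw [Finset.inf_univ_fin_cast hlen ds]
      exact hle.trans hd

end Instantiation

section Theorems

variable {V CS DP PP D : Type*} [DecidableEq V] [Lattice D] [BoundedOrder D]
variable {arC : CS → ℕ} {arD : DP → ℕ}

theorem entailment_property_for_programs_general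
    (Q : QualificationDomain D) (Rl : ProximityRel D arC arD)
    (pI : PP → List (Trm Empty CS) → Prop)
    (P : Set (Clause V CS DP PP D))
    (φ φ' : QCAtom V CS DP PP D) (hφ' : Observable pI φ')
    (hder : Deriv Q Rl pI P φ) (hent : QCEntails pI φ φ') :
    Deriv Q Rl pI P φ' := by
  obtain ⟨θ, hatom, hdeg, hE⟩ := hent
  have h := hder.subst hφ'.1 hdeg hE
  rwa [← hatom] at h

/-- Entailment property for programs: if `P ⊢_{ℛ,Q,C} φ` and
`φ ⊨_{Q,C} φ'` for observable qc-atoms `φ`, `φ'`, then `P ⊢_{ℛ,Q,C} φ'`. -/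
theorem entailment_property_for_programs
    (Q : QualificationDomain D) (Rl : ProximityRel D arC arD)
    (pI : PP → List (Trm Empty CS) → Prop)
    (P : Set (Clause V CS DP PP D)) (hP : ProgWF P)
    (φ φ' : QCAtom V CS DP PP D) (hφ : Observable pI φ) (hφ' : Observable pI φ')
    (hder : Deriv Q Rl pI P φ) (hent : QCEntails pI φ φ') :
    Deriv Q Rl pI P φ' :=
  entailment_property_for_programs_general Q Rl pI P φ φ' hφ' hder hent

end Theorems
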